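/- arXiv:2210.05114 — 8 statements merged into one kernel-verified Lean document; each statement's English description precedes it below -/
import Mathlib

section
/- Let E be a subspace of L¹(μ) (over a measure space, real scalars) containing no ε-almost disjoint pairs, i.e., for all f, g ∈ E with ‖f‖ = ‖g‖ = 1 one has ‖|f| ∧ |g|‖ ≥ ε. Then E does (2/ε)-stable phase retrieval: for all f, g ∈ E, min(‖f-g‖, ‖f+g‖) ≤ (2/ε)‖|f| - |g|‖. -/
/-!
Normalise `f - g` and `f + g` to unit vectors `u`, `v` of `E`. If `a = min ‖f - g‖ ‖f + g‖`, then
`a • (|u| ⊓ |v|) ≤ |f - g| ⊓ |f + g|`, and in any vector lattice `|f - g| ⊓ |f + g| = ||f| - |g||`.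
Since the `L¹` norm is solid, `ε a ≤ a ‖|u| ⊓ |v|‖ ≤ ‖|f| - |g|‖`; this gives even the constant `1/ε`.
-/

open MeasureTheory

namespace MeasureTheory.Lp

instance instPosSMulMono {Ω 𝕜 E : Type*} [MeasurableSpace Ω] {μ : Measure Ω} {p : ENNReal}
    [NormedRing 𝕜] [PartialOrder 𝕜] [NormedAddCommGroup E] [PartialOrder E] [Module 𝕜 E]
    [IsBoundedSMul 𝕜 E] [PosSMulMono 𝕜 E] : PosSMulMono 𝕜 (Lp E p μ) where
  smul_le_smul_of_nonneg_left c hc f g hfg := by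
    rw [← coeFn_le] at hfg ⊢
    filter_upwards [coeFn_smul c f, coeFn_smul c g, hfg] with x hcf hcg hx
    rw [hcf, hcg]
    exact smul_le_smul_of_nonneg_left hx hc

end MeasureTheory.Lp

section LatticeOrderedGroup

variable {α : Type*} [Lattice α] [AddCommGroup α]

theorem add_inf_sub_eq_sub_abs [IsOrderedAddMonoid α] (a b : α) :
    (a + b) ⊓ (a - b) = a - |b| := by
  rw [sub_eq_add_neg a b, ← add_inf, abs, sub_eq_add_neg, neg_sup, neg_neg, inf_comm]

/-- Expand the left side by distributivity into four infima, each of the form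
`(a + b) ⊓ (a - b) = a - |b|`. -/
theorem abs_sub_inf_abs_add [IsOrderedAddMonoid α] (x y : α) :
    |x - y| ⊓ |x + y| = |(|x| - |y|)| := by
  let := AddCommGroup.toDistribLattice α
  have hxy : (x - y) ⊓ (x + y) = x - |y| := by rw [inf_comm, add_inf_sub_eq_sub_abs]
  have hx : (x - y) ⊓ -(x + y) = -y - |x| := by
    rw [← add_inf_sub_eq_sub_abs]; congr 1 <;> abel
  have hy : -(x - y) ⊓ (x + y) = y - |x| := by
    rw [← add_inf_sub_eq_sub_abs, inf_comm]; congr 1 <;> abel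
  have hyx : -(x - y) ⊓ -(x + y) = -x - |y| := by
    rw [← add_inf_sub_eq_sub_abs]; congr 1 <;> abel
  rw [abs.eq_1 (x - y), abs.eq_1 (x + y), inf_sup_left, inf_sup_right, inf_sup_right,
    hxy, hx, hy, hyx, abs.eq_1 (|x| - |y|), neg_sub, abs.eq_1 x, sup_sub, abs.eq_1 y, sup_sub]
  ac_rfl

variable {R : Type*} [Ring R] [PartialOrder R] [Module R α] [PosSMulMono R α]

theorem abs_smul_le_smul_abs {c : R} (hc : 0 ≤ c) (x : α) : |c • x| ≤ c • |x| :=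
  abs_le'.2 ⟨smul_le_smul_of_nonneg_left (le_abs_self x) hc,
    by rw [← smul_neg]; exact smul_le_smul_of_nonneg_left (neg_le_abs x) hc⟩

theorem smul_abs_smul_le_abs [IsOrderedRing R] [IsOrderedAddMonoid α] {c d : R} (hc : 0 ≤ c)
    (hd : 0 ≤ d) (hcd : c * d ≤ 1) (x : α) : c • |d • x| ≤ |x| :=
  calc c • |d • x| ≤ c • d • |x| := smul_le_smul_of_nonneg_left (abs_smul_le_smul_abs hd x) hc
    _ = (c * d) • |x| := smul_smul c d |x|
    _ ≤ |x| := smul_le_of_le_one_left (abs_nonneg x) hcd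

end LatticeOrderedGroup

section NormedLattice

variable {α : Type*} [NormedAddCommGroup α] [Lattice α] [HasSolidNorm α] [IsOrderedAddMonoid α]
  [NormedSpace ℝ α] [PosSMulMono ℝ α]

def HasNoAlmostDisjointPairs (E : Submodule ℝ α) (ε : ℝ) : Prop :=
  ∀ f ∈ E, ∀ g ∈ E, ‖f‖ = 1 → ‖g‖ = 1 → ε ≤ ‖|f| ⊓ |g|‖

theorem HasNoAlmostDisjointPairs.mul_min_norm_le_norm_inf_abs {E : Submodule ℝ α} {ε : ℝ}
    (hE : HasNoAlmostDisjointPairs E ε) {x y : α} (hx : x ∈ E) (hy : y ∈ E) :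
    ε * min ‖x‖ ‖y‖ ≤ ‖|x| ⊓ |y|‖ := by
  rcases eq_or_ne x 0 with rfl | hx0
  · simp
  rcases eq_or_ne y 0 with rfl | hy0
  · simp
  set a := min ‖x‖ ‖y‖
  set w := |‖x‖⁻¹ • x| ⊓ |‖y‖⁻¹ • y|
  have ha : 0 ≤ a := le_min (norm_nonneg x) (norm_nonneg y)
  have hε : ε ≤ ‖w‖ := hE _ (E.smul_mem _ hx) _ (E.smul_mem _ hy)
    (norm_smul_inv_norm hx0) (norm_smul_inv_norm hy0)
  have hbound (z : α) (hz : a ≤ ‖z‖) : a • |‖z‖⁻¹ • z| ≤ |z| :=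
    smul_abs_smul_le_abs ha (inv_nonneg.2 (norm_nonneg z))
      (mul_inv_le_one_of_le₀ hz (norm_nonneg z)) z
  have hw : a • w ≤ |x| ⊓ |y| :=
    le_inf ((smul_le_smul_of_nonneg_left inf_le_left ha).trans (hbound x (min_le_left _ _)))
      ((smul_le_smul_of_nonneg_left inf_le_right ha).trans (hbound y (min_le_right _ _)))
  have hw0 : 0 ≤ a • w := smul_nonneg ha (le_inf (abs_nonneg _) (abs_nonneg _))
  calc ε * a ≤ ‖w‖ * a := mul_le_mul_of_nonneg_right hε ha
    _ = ‖a • w‖ := by rw [norm_smul, Real.norm_of_nonneg ha, mul_comm]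
    _ ≤ ‖|x| ⊓ |y|‖ := norm_le_norm_of_abs_le_abs (by
        rwa [abs_of_nonneg hw0, abs_of_nonneg (hw0.trans hw)])

theorem HasNoAlmostDisjointPairs.mul_min_norm_sub_norm_add_le {E : Submodule ℝ α} {ε : ℝ}
    (hE : HasNoAlmostDisjointPairs E ε) {f g : α} (hf : f ∈ E) (hg : g ∈ E) :
    ε * min ‖f - g‖ ‖f + g‖ ≤ ‖|f| - |g|‖ := by
  simpa only [abs_sub_inf_abs_add, norm_abs_eq_norm] using
    hE.mul_min_norm_le_norm_inf_abs (E.sub_mem hf hg) (E.add_mem hf hg)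

end NormedLattice

/-- A subspace of real `L¹(μ)` with no `ε`-almost disjoint pairs does `(2/ε)`-stable
phase retrieval. -/
theorem SPR_of_no_almost_disjoint_pairs_L1 {Ω : Type*} [MeasurableSpace Ω] (μ : Measure Ω)
    (E : Submodule ℝ (Lp ℝ 1 μ)) (ε : ℝ) (hε : 0 < ε)
    (h : ∀ f ∈ E, ∀ g ∈ E, ‖f‖ = 1 → ‖g‖ = 1 → ε ≤ ‖|f| ⊓ |g|‖) :
    ∀ f ∈ E, ∀ g ∈ E, min ‖f - g‖ ‖f + g‖ ≤ (2 / ε) * ‖|f| - |g|‖ := by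
  intro f hf g hg
  have key : ε * min ‖f - g‖ ‖f + g‖ ≤ ‖|f| - |g|‖ :=
    HasNoAlmostDisjointPairs.mul_min_norm_sub_norm_add_le h hf hg
  rw [div_mul_eq_mul_div, le_div_iff₀ hε]
  linarith [norm_nonneg (|f| - |g|)]
end

section
/- A subspace E of a real Banach lattice X does phase retrieval (|f| = |g| for f,g ∈ E implies f = g or f = -g) if and only if E contains no pair of nonzero disjoint vectors (f, g ∈ E nonzero with |f| ∧ |g| = 0). -/
/-!
In a lattice-ordered group, distributivity gives `|f + g| ⊓ |f - g| = | |f| - |g| |` and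
`|f + g| ⊔ |f - g| = |f| + |g|`. So the substitution `(f, g) ↦ (f + g, f - g)`, which preserves `E`
and is invertible over `ℝ`, exchanges the two conditions: `|f| = |g|` makes `f + g` and `f - g`
disjoint, and disjoint `f, g` have `|f + g| ⊓ |f - g| = |f| ⊔ |g| = |f + g| ⊔ |f - g|`, i.e.
`|f + g| = |f - g|`; meanwhile `f = ±g` corresponds to `f - g = 0` or `f + g = 0`.
-/

section LatticeOrderedGroup

variable {α : Type*} [Lattice α] [AddCommGroup α] [AddLeftMono α] (a b : α)

lemma neg_inf_self_eq_neg_abs : -a ⊓ a = -|a| := by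
  rw [abs, neg_sup, neg_neg]

lemma abs_add_sup_abs_sub : |a + b| ⊔ |a - b| = |a| + |b| :=
  calc |a + b| ⊔ |a - b| = (a + b) ⊔ (a + -b) ⊔ ((-a + b) ⊔ (-a + -b)) := by
        simp only [abs, neg_add, sub_eq_add_neg, neg_neg]; ac_rfl
    _ = |a| + |b| := by rw [← add_sup, ← add_sup, ← sup_add]; rfl

lemma abs_add_inf_abs_sub : |a + b| ⊓ |a - b| = |(|a| - |b|)| := by
  let := AddCommGroup.toDistribLattice α
  calc |a + b| ⊓ |a - b|
      = ((a + b) ⊔ (-a + -b)) ⊓ ((a + -b) ⊔ (-a + b)) := by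
        simp only [abs, neg_add, sub_eq_add_neg, neg_neg]
    _ = (a + (b ⊓ -b)) ⊔ ((a ⊓ -a) + b) ⊔ (((-a ⊓ a) + -b) ⊔ (-a + (-b ⊓ b))) := by
        rw [inf_sup_right, inf_sup_left, inf_sup_left, add_inf, inf_add, inf_add, add_inf]
    _ = (a - |b|) ⊔ (-a - |b|) ⊔ ((b - |a|) ⊔ (-b - |a|)) := by
        rw [inf_comm b, inf_comm a, neg_inf_self_eq_neg_abs, neg_inf_self_eq_neg_abs]
        simp only [sub_eq_add_neg, add_comm (-|a|)]
        ac_rfl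
    _ = |(|a| - |b|)| := by
        rw [← sup_sub, ← sup_sub]
        change (|a| - |b|) ⊔ (|b| - |a|) = _
        rw [← neg_sub |a|]
        rfl

lemma abs_add_eq_abs_sub_of_abs_inf_abs_eq_zero (h : |a| ⊓ |b| = 0) : |a + b| = |a - b| := by
  refine inf_eq_sup.mp ?_
  rw [abs_add_inf_abs_sub, abs_add_sup_abs_sub, abs_sub_comm, ← sup_sub_inf_eq_abs_sub,
    ← inf_add_sup, h, sub_zero, zero_add]

end LatticeOrderedGroup

lemma eq_zero_of_add_eq_sub {M : Type*} [AddCommGroup M] [Module ℝ M] {a b : M}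
    (h : a + b = a - b) : b = 0 := by
  have hb : (2 : ℝ) • b = 0 := by
    rw [two_smul, ← sub_eq_zero.mpr h]
    abel
  exact (smul_eq_zero.mp hb).resolve_left two_ne_zero

theorem phaseRetrieval_iff_no_disjoint_pair_general {X : Type*} [NormedAddCommGroup X] [Lattice X]
    [IsOrderedAddMonoid X]
    [NormedSpace ℝ X] (E : Submodule ℝ X) :
    (∀ f ∈ E, ∀ g ∈ E, |f| = |g| → f = g ∨ f = -g) ↔
      ¬ ∃ f ∈ E, ∃ g ∈ E, f ≠ 0 ∧ g ≠ 0 ∧ |f| ⊓ |g| = 0 := by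
  constructor
  · rintro hPR ⟨f, hf, g, hg, hf0, hg0, hfg⟩
    rcases hPR (f + g) (E.add_mem hf hg) (f - g) (E.sub_mem hf hg)
      (abs_add_eq_abs_sub_of_abs_inf_abs_eq_zero f g hfg) with h | h
    · exact hg0 (eq_zero_of_add_eq_sub h)
    · exact hf0 (eq_zero_of_add_eq_sub (by rw [add_comm, h, neg_sub]))
  · intro hno f hf g hg hfg
    by_contra! hne
    refine hno ⟨f + g, E.add_mem hf hg, f - g, E.sub_mem hf hg, ?_, sub_ne_zero.mpr hne.1, ?_⟩
    · exact fun h => hne.2 (eq_neg_of_add_eq_zero_left h)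
    · rw [abs_add_inf_abs_sub, hfg, sub_self, abs_zero]

/-- A subspace of a real Banach lattice does phase retrieval if and only if it contains
no pair of nonzero disjoint vectors. -/
theorem phaseRetrieval_iff_no_disjoint_pair {X : Type*} [NormedAddCommGroup X] [Lattice X]
    [IsOrderedAddMonoid X] [HasSolidNorm X]
    [NormedSpace ℝ X] (E : Submodule ℝ X) :
    (∀ f ∈ E, ∀ g ∈ E, |f| = |g| → f = g ∨ f = -g) ↔
      ¬ ∃ f ∈ E, ∃ g ∈ E, f ≠ 0 ∧ g ≠ 0 ∧ |f| ⊓ |g| = 0 :=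
  phaseRetrieval_iff_no_disjoint_pair_general E
end

section
/- Let E be a real Banach space and x, y ∈ E with ‖x‖ = ‖y‖ = 1. Then there exists a functional f ∈ E* with ‖f‖ = 1 such that |f(x)| ≥ 1/5 and |f(y)| ≥ 1/5. -/
/-! Take norming functionals `f` for `x` and `g` for `y`. If `|f y|` or `|g x|` is at least `1/5`,
that functional already works. Otherwise `(f + g) x` and `(f + g) y` both exceed `4/5` while
`‖f + g‖ ≤ 2`, so the normalization of `f + g` is at least `2/5` on both vectors. -/

section Normalize

variable {V F : Type*} [NormedAddCommGroup V] [NormedSpace ℝ V]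
  [NormedAddCommGroup F] [NormedSpace ℝ F]

theorem ContinuousLinearMap.norm_inv_norm_smul_self {f : V →L[ℝ] F} (hf : f ≠ 0) :
    ‖‖f‖⁻¹ • f‖ = 1 := by
  rw [norm_smul, norm_inv, norm_norm, inv_mul_cancel₀ (norm_ne_zero_iff.mpr hf)]

theorem ContinuousLinearMap.norm_inv_norm_smul_self_apply (f : V →L[ℝ] F) (v : V) :
    ‖(‖f‖⁻¹ • f) v‖ = ‖f v‖ / ‖f‖ := by
  rw [smul_apply, norm_smul, norm_inv, norm_norm, inv_mul_eq_div]

end Normalize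

theorem exists_functional_both_large_of_norming {V : Type*} [NormedAddCommGroup V]
    [NormedSpace ℝ V] {x y : V} {f g : V →L[ℝ] ℝ} (hf : ‖f‖ = 1) (hg : ‖g‖ = 1)
    (hfx : f x = 1) (hgy : g y = 1) :
    ∃ h : V →L[ℝ] ℝ, ‖h‖ = 1 ∧ 1 / 5 ≤ |h x| ∧ 1 / 5 ≤ |h y| := by
  by_cases hfy : 1 / 5 ≤ |f y|
  · exact ⟨f, hf, by norm_num [hfx], hfy⟩
  by_cases hgx : 1 / 5 ≤ |g x|
  · exact ⟨g, hg, hgx, by norm_num [hgy]⟩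
  rw [not_le] at hfy hgx
  have hsum_le : ‖f + g‖ ≤ 2 := by
    linarith [norm_add_le f g]
  have hsum_x : 4 / 5 < |(f + g) x| := by
    rw [add_apply, hfx]
    linarith [neg_abs_le (g x), le_abs_self (1 + g x)]
  have hsum_y : 4 / 5 < |(f + g) y| := by
    rw [add_apply, hgy]
    linarith [neg_abs_le (f y), le_abs_self (f y + 1)]
  have hsum_ne : f + g ≠ 0 := by
    rintro hzero
    norm_num [hzero] at hsum_x
  have hsum_pos : 0 < ‖f + g‖ := norm_pos_iff.mpr hsum_ne
  have large {v : V} (hv : 4 / 5 < |(f + g) v|) : 1 / 5 ≤ |(‖f + g‖⁻¹ • (f + g)) v| := by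
    rw [← Real.norm_eq_abs, ContinuousLinearMap.norm_inv_norm_smul_self_apply,
      Real.norm_eq_abs, le_div_iff₀ hsum_pos]
    linarith
  exact ⟨‖f + g‖⁻¹ • (f + g), ContinuousLinearMap.norm_inv_norm_smul_self hsum_ne,
    large hsum_x, large hsum_y⟩

/-- For any two norm-one vectors `x, y` of a real Banach space there is a norm-one
functional `f` with `|f(x)| ≥ 1/5` and `|f(y)| ≥ 1/5`. -/
theorem exists_functional_both_large {V : Type*} [NormedAddCommGroup V] [NormedSpace ℝ V]
    (x y : V) (hx : ‖x‖ = 1) (hy : ‖y‖ = 1) :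
    ∃ f : V →L[ℝ] ℝ, ‖f‖ = 1 ∧ 1 / 5 ≤ |f x| ∧ 1 / 5 ≤ |f y| := by
  obtain ⟨f, hf, hfx⟩ := exists_dual_vector ℝ x (norm_ne_zero_iff.mp (by simp [hx]))
  obtain ⟨g, hg, hgy⟩ := exists_dual_vector ℝ y (norm_ne_zero_iff.mp (by simp [hy]))
  rw [hx, RCLike.ofReal_one] at hfx
  rw [hy, RCLike.ofReal_one] at hgy
  exact exists_functional_both_large_of_norming hf hg hfx hgy
end

section
/- For every ε > 0 and every pair x, y in the unit sphere of ℓ∞ (real bounded sequences), there exists a norm-one functional f in ℓ¹ (viewed inside (ℓ∞)*) with |f(x)| ∧ |f(y)| ≥ 1/5 - ε. Consequently, the map J: ℓ∞ → ℓ∞(I) given by x ↦ (f_i(x))_{i∈I}, for a dense sequence (f_i) in the unit sphere of ℓ¹, is an isometric embedding satisfying ‖|Jx| ∧ |Jy|‖∞ ≥ 1/5 for all norm-one x, y. -/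
open scoped ENNReal

namespace EllInftySPRAux

/-- The products `g n * x n` are summable for `g ∈ ℓ¹`, `x ∈ ℓ∞`. -/
lemma summable_mul (g : lp (fun _ : ℕ => ℝ) 1) (x : lp (fun _ : ℕ => ℝ) ∞) :
    Summable fun n => g n * x n := by
  have hg : Summable fun n => ‖g n‖ := by
    have := (lp.memℓp g).summable (p := 1) (by norm_num)
    simpa using this
  refine Summable.of_abs ?_
  refine Summable.of_nonneg_of_le (fun n => abs_nonneg _) (fun n => ?_) (hg.mul_right ‖x‖)
  rw [abs_mul]
  have hx : |x n| ≤ ‖x‖ := lp.norm_apply_le_norm ENNReal.top_ne_zero x n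
  have : (0:ℝ) ≤ |g n| := abs_nonneg _
  calc |g n| * |x n| ≤ |g n| * ‖x‖ := by
        exact mul_le_mul_of_nonneg_left hx this
    _ = ‖g n‖ * ‖x‖ := by rw [Real.norm_eq_abs]

lemma norm_eq_tsum (g : lp (fun _ : ℕ => ℝ) 1) : ‖g‖ = ∑' n, ‖g n‖ := by
  have := lp.norm_eq_tsum_rpow (p := 1) (by norm_num) g
  simpa using this

/-- Hölder-type bound for the pairing. -/
lemma abs_pairing_le (g : lp (fun _ : ℕ => ℝ) 1) (x : lp (fun _ : ℕ => ℝ) ∞) :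
    |∑' n, g n * x n| ≤ ‖g‖ * ‖x‖ := by
  have hg : Summable fun n => ‖g n‖ := by
    have := (lp.memℓp g).summable (p := 1) (by norm_num)
    simpa using this
  have habs : Summable fun n => |g n * x n| :=
    (summable_mul g x).abs
  have h1 : |∑' n, g n * x n| ≤ ∑' n, |g n * x n| := by
    have hns : Summable fun n => ‖g n * x n‖ := by
      simpa only [Real.norm_eq_abs] using habs
    have h := norm_tsum_le_tsum_norm (f := fun n => g n * x n) hns
    simpa only [Real.norm_eq_abs] using h
  have h2 : ∑' n, |g n * x n| ≤ ∑' n, ‖g n‖ * ‖x‖ := by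
    refine Summable.tsum_le_tsum (fun n => ?_) ?_ (hg.mul_right ‖x‖)
    · rw [abs_mul, Real.norm_eq_abs]
      exact mul_le_mul_of_nonneg_left (lp.norm_apply_le_norm ENNReal.top_ne_zero x n)
        (abs_nonneg _)
    · exact habs
  rw [tsum_mul_right, ← norm_eq_tsum] at h2
  exact h1.trans h2

/-- Perturbation bound for the pairing. -/
lemma pairing_diff (g h : lp (fun _ : ℕ => ℝ) 1) (x : lp (fun _ : ℕ => ℝ) ∞) :
    |(∑' n, g n * x n) - ∑' n, h n * x n| ≤ ‖g - h‖ * ‖x‖ := by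
  have hsum : (∑' n, g n * x n) - ∑' n, h n * x n = ∑' n, (g - h) n * x n := by
    rw [← Summable.tsum_sub (summable_mul g x) (summable_mul h x)]
    refine tsum_congr fun n => ?_
    have : (g - h) n = g n - h n := by
      simp [lp.coeFn_sub]
    rw [this, sub_mul]
  rw [hsum]
  exact abs_pairing_le _ _

/-- The two-point element of `ℓ¹`. -/
lemma two_point (n m : ℕ) (hnm : n ≠ m) (a b : ℝ) :
    ∃ g : lp (fun _ : ℕ => ℝ) 1, ‖g‖ = |a| + |b| ∧
      ∀ x : lp (fun _ : ℕ => ℝ) ∞, ∑' k, g k * x k = a * x n + b * x m := by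
  classical
  set F : ℕ → ℝ := fun k => if k = n then a else if k = m then b else 0 with hFdef
  have hF0 : ∀ k ∉ ({n, m} : Finset ℕ), F k = 0 := by
    intro k hk
    simp only [Finset.mem_insert, Finset.mem_singleton, not_or] at hk
    simp [hFdef, hk.1, hk.2]
  have hmem : Memℓp F 1 := by
    apply memℓp_gen
    refine summable_of_ne_finset_zero (s := ({n, m} : Finset ℕ)) (fun k hk => ?_)
    rw [hF0 k hk]
    simp
  refine ⟨⟨F, hmem⟩, ?_, ?_⟩
  · rw [norm_eq_tsum]
    have : ∀ k ∉ ({n, m} : Finset ℕ), ‖F k‖ = 0 := by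
      intro k hk; rw [hF0 k hk]; simp
    rw [tsum_eq_sum this, Finset.sum_pair hnm]
    simp [hFdef, hnm.symm, Real.norm_eq_abs]
  · intro x
    have : ∀ k ∉ ({n, m} : Finset ℕ), F k * x k = 0 := by
      intro k hk; rw [hF0 k hk]; simp
    rw [show (∑' k, (⟨F, hmem⟩ : lp (fun _ : ℕ => ℝ) 1) k * x k) = ∑' k, F k * x k from rfl,
      tsum_eq_sum this, Finset.sum_pair hnm]
    simp [hFdef, hnm.symm]

/-- One-point signed element. -/
lemma one_point (n : ℕ) (c : ℝ) :
    ∃ g : lp (fun _ : ℕ => ℝ) 1, ‖g‖ = 1 ∧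
      ∀ x : lp (fun _ : ℕ => ℝ) ∞, ∑' k, g k * x k =
        (if 0 ≤ c then (1:ℝ) else -1) * x n := by
  obtain ⟨g, hg1, hg2⟩ := two_point n (n + 1) (by omega) (if 0 ≤ c then (1:ℝ) else -1) 0
  refine ⟨g, ?_, fun x => by rw [hg2 x]; ring⟩
  rw [hg1]
  by_cases h : 0 ≤ c <;> simp [h]

lemma sgn_mul_self (c : ℝ) : (if 0 ≤ c then (1:ℝ) else -1) * c = |c| := by
  by_cases h : 0 ≤ c
  · rw [if_pos h, abs_of_nonneg h, one_mul]
  · rw [if_neg h, abs_of_neg (lt_of_not_ge h)]; ring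

/-- The key quantitative lemma: min ≥ 1/4. -/
lemma exists_good (x y : lp (fun _ : ℕ => ℝ) ∞) (hx : ‖x‖ = 1) (hy : ‖y‖ = 1) :
    ∃ g : lp (fun _ : ℕ => ℝ) 1, ‖g‖ = 1 ∧
      1 / 4 ≤ |∑' n, g n * x n| ∧ 1 / 4 ≤ |∑' n, g n * y n| := by
  classical
  obtain ⟨n, hn⟩ : ∃ n, (7:ℝ)/8 < |x n| := by
    have h : (7:ℝ)/8 < ⨆ i, ‖x i‖ := by
      rw [← lp.norm_eq_ciSup, hx]; norm_num
    obtain ⟨n, hn⟩ := exists_lt_of_lt_ciSup h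
    exact ⟨n, by rwa [Real.norm_eq_abs] at hn⟩
  obtain ⟨m, hm⟩ : ∃ m, (7:ℝ)/8 < |y m| := by
    have h : (7:ℝ)/8 < ⨆ i, ‖y i‖ := by
      rw [← lp.norm_eq_ciSup, hy]; norm_num
    obtain ⟨m, hm⟩ := exists_lt_of_lt_ciSup h
    exact ⟨m, by rwa [Real.norm_eq_abs] at hm⟩
  by_cases hyn : (1:ℝ)/4 ≤ |y n|
  · obtain ⟨g, hg1, hg2⟩ := one_point n (x n)
    refine ⟨g, hg1, ?_, ?_⟩
    · rw [hg2 x, sgn_mul_self]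
      rw [abs_abs]; linarith
    · rw [hg2 y]
      have : |(if 0 ≤ x n then (1:ℝ) else -1) * y n| = |y n| := by
        by_cases h : 0 ≤ x n <;> simp [h, abs_mul]
      rw [this]; linarith
  by_cases hxm : (1:ℝ)/4 ≤ |x m|
  · obtain ⟨g, hg1, hg2⟩ := one_point m (y m)
    refine ⟨g, hg1, ?_, ?_⟩
    · rw [hg2 x]
      have : |(if 0 ≤ y m then (1:ℝ) else -1) * x m| = |x m| := by
        by_cases h : 0 ≤ y m <;> simp [h, abs_mul]
      rw [this]; linarith
    · rw [hg2 y, sgn_mul_self (y m), abs_abs]; linarith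
  · push_neg at hyn hxm
    have hnm : n ≠ m := by
      intro h; rw [h] at hn; linarith
    set sx : ℝ := if 0 ≤ x n then (1:ℝ) else -1 with hsx
    set sy : ℝ := if 0 ≤ y m then (1:ℝ) else -1 with hsy
    obtain ⟨g, hg1, hg2⟩ := two_point n m hnm (sx / 2) (sy / 2)
    have hsx1 : |sx| = 1 := by by_cases h : 0 ≤ x n <;> simp [hsx, h]
    have hsy1 : |sy| = 1 := by by_cases h : 0 ≤ y m <;> simp [hsy, h]
    refine ⟨g, ?_, ?_, ?_⟩
    · rw [hg1, abs_div, abs_div, hsx1, hsy1]; norm_num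
    · rw [hg2 x]
      have h1 : sx / 2 * x n = |x n| / 2 := by
        rw [div_mul_eq_mul_div, sgn_mul_self (x n)]
      have h2 : |sy / 2 * x m| = |x m| / 2 := by
        rw [abs_mul, abs_div, hsy1, abs_two]; ring
      have h3 : -(|x m| / 2) ≤ sy / 2 * x m := by
        have := neg_abs_le (sy / 2 * x m); rw [h2] at this; linarith
      have : (1:ℝ)/4 ≤ sx / 2 * x n + sy / 2 * x m := by
        rw [h1]; linarith
      exact this.trans (le_abs_self _)
    · rw [hg2 y]
      have h1 : sy / 2 * y m = |y m| / 2 := by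
        rw [div_mul_eq_mul_div, sgn_mul_self (y m)]
      have h2 : |sx / 2 * y n| = |y n| / 2 := by
        rw [abs_mul, abs_div, hsx1, abs_two]; ring
      have h3 : -(|y n| / 2) ≤ sx / 2 * y n := by
        have := neg_abs_le (sx / 2 * y n); rw [h2] at this; linarith
      have : (1:ℝ)/4 ≤ sx / 2 * y n + sy / 2 * y m := by
        rw [h1]; linarith
      exact this.trans (le_abs_self _)

end EllInftySPRAux

open EllInftySPRAux in
/-- For every `ε > 0` and norm-one `x, y ∈ ℓ∞` there is a norm-one `g ∈ ℓ¹` with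
`|g(x)| ∧ |g(y)| ≥ 1/5 - ε`; consequently, for any dense sequence `(f i)` in the unit
sphere of `ℓ¹`, the map `J : x ↦ (f_i(x))ᵢ` is an isometric embedding of `ℓ∞` into
`ℓ∞(ℕ)` with `‖|Jx| ∧ |Jy|‖ ≥ 1/5` for all norm-one `x, y`. -/
theorem ell_infty_SPR_embedding
    (f : ℕ → lp (fun _ : ℕ => ℝ) 1) (hf : ∀ i, ‖f i‖ = 1)
    (hdense : ∀ g : lp (fun _ : ℕ => ℝ) 1, ‖g‖ = 1 → ∀ δ > (0:ℝ), ∃ i, ‖g - f i‖ < δ) :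
    (∀ ε > (0:ℝ), ∀ x y : lp (fun _ : ℕ => ℝ) ∞, ‖x‖ = 1 → ‖y‖ = 1 →
      ∃ g : lp (fun _ : ℕ => ℝ) 1, ‖g‖ = 1 ∧
        1 / 5 - ε ≤ |∑' n, g n * x n| ∧ 1 / 5 - ε ≤ |∑' n, g n * y n|) ∧
    (∀ x : lp (fun _ : ℕ => ℝ) ∞, (⨆ i, |∑' n, f i n * x n|) = ‖x‖) ∧
    (∀ x y : lp (fun _ : ℕ => ℝ) ∞, ‖x‖ = 1 → ‖y‖ = 1 →
      1 / 5 ≤ ⨆ i, min |∑' n, f i n * x n| |∑' n, f i n * y n|) := by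
  have hub : ∀ (i : ℕ) (x : lp (fun _ : ℕ => ℝ) ∞), |∑' n, f i n * x n| ≤ ‖x‖ := by
    intro i x
    have := abs_pairing_le (f i) x
    rwa [hf i, one_mul] at this
  refine ⟨?_, ?_, ?_⟩
  · intro ε hε x y hx hy
    obtain ⟨g, hg1, hg2, hg3⟩ := exists_good x y hx hy
    exact ⟨g, hg1, by linarith, by linarith⟩
  · intro x
    have hbdd : BddAbove (Set.range fun i => |∑' n, f i n * x n|) := by
      refine ⟨‖x‖, ?_⟩
      rintro _ ⟨i, rfl⟩
      exact hub i x
    refine le_antisymm (ciSup_le fun i => hub i x) ?_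
    refine le_of_forall_sub_le fun η hη => ?_
    have hsup0 : (0:ℝ) ≤ ⨆ i, |∑' n, f i n * x n| :=
      le_trans (abs_nonneg _) (le_ciSup hbdd 0)
    by_cases hxs : ‖x‖ ≤ η / 2
    · linarith
    · push_neg at hxs
      obtain ⟨n, hn⟩ : ∃ n, ‖x‖ - η / 2 < |x n| := by
        have h : ‖x‖ - η / 2 < ⨆ i, ‖x i‖ := by
          rw [← lp.norm_eq_ciSup]; linarith
        obtain ⟨n, hn⟩ := exists_lt_of_lt_ciSup h
        exact ⟨n, by rwa [Real.norm_eq_abs] at hn⟩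
      obtain ⟨g, hg1, hg2⟩ := one_point n (x n)
      have hgx : ∑' k, g k * x k = |x n| := by
        rw [hg2 x, sgn_mul_self]
      have hx1 : (0:ℝ) < ‖x‖ + 1 := by linarith [norm_nonneg x]
      have hδ : (0:ℝ) < η / (2 * (‖x‖ + 1)) := div_pos hη (by linarith)
      obtain ⟨i, hi⟩ := hdense g hg1 _ hδ
      have hdiff : |(∑' k, g k * x k) - ∑' k, f i k * x k| ≤ ‖g - f i‖ * ‖x‖ :=
        pairing_diff g (f i) x
      have hxnn : (0:ℝ) ≤ ‖x‖ := norm_nonneg x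
      have hkey : ‖g - f i‖ * ‖x‖ < η / 2 := by
        have h1 : ‖g - f i‖ * ‖x‖ ≤ ‖g - f i‖ * (‖x‖ + 1) := by nlinarith [norm_nonneg (g - f i)]
        have h2 : ‖g - f i‖ * (‖x‖ + 1) < η / (2 * (‖x‖ + 1)) * (‖x‖ + 1) :=
          mul_lt_mul_of_pos_right hi hx1
        have h3 : η / (2 * (‖x‖ + 1)) * (‖x‖ + 1) = η / 2 := by
          rw [← div_div, div_mul_cancel₀ _ (ne_of_gt hx1)]
        linarith
      have : ‖x‖ - η ≤ |∑' k, f i k * x k| := by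
        have habs := abs_sub_abs_le_abs_sub (∑' k, g k * x k) (∑' k, f i k * x k)
        rw [hgx] at habs hdiff
        have : |x n| - η / 2 ≤ |∑' k, f i k * x k| := by
          rw [abs_abs] at habs
          linarith
        linarith
      exact this.trans (le_ciSup hbdd i)
  · intro x y hx hy
    obtain ⟨g, hg1, hg2, hg3⟩ := exists_good x y hx hy
    have hbdd : BddAbove (Set.range fun i => min |∑' n, f i n * x n| |∑' n, f i n * y n|) := by
      refine ⟨1, ?_⟩
      rintro _ ⟨i, rfl⟩
      exact le_trans (min_le_left _ _) (by rw [← hx]; exact hub i x)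
    have hstep : ∀ δ > (0:ℝ), (1:ℝ)/4 - δ ≤
        ⨆ i, min |∑' n, f i n * x n| |∑' n, f i n * y n| := by
      intro δ hδ
      obtain ⟨i, hi⟩ := hdense g hg1 δ hδ
      have hdx : |(∑' k, g k * x k) - ∑' k, f i k * x k| ≤ ‖g - f i‖ * ‖x‖ :=
        pairing_diff g (f i) x
      have hdy : |(∑' k, g k * y k) - ∑' k, f i k * y k| ≤ ‖g - f i‖ * ‖y‖ :=
        pairing_diff g (f i) y
      rw [hx, mul_one] at hdx
      rw [hy, mul_one] at hdy
      have h1 : (1:ℝ)/4 - δ ≤ |∑' k, f i k * x k| := by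
        have := abs_sub_abs_le_abs_sub (∑' k, g k * x k) (∑' k, f i k * x k)
        linarith
      have h2 : (1:ℝ)/4 - δ ≤ |∑' k, f i k * y k| := by
        have := abs_sub_abs_le_abs_sub (∑' k, g k * y k) (∑' k, f i k * y k)
        linarith
      exact le_trans (le_min h1 h2) (le_ciSup hbdd i)
    have : (1:ℝ)/4 ≤ ⨆ i, min |∑' n, f i n * x n| |∑' n, f i n * y n| :=
      le_of_forall_sub_le hstep
    linarith
end

section
/- Let (e_i) be an orthonormal sequence of independent mean-zero random variables in real L²(μ) spanning a subspace E with ‖|u| ∧ |v|‖ ≥ γ for all norm-one u, v ∈ E. Let (f_i) be normalized independent mean-zero random variables with (e_i, f_j) independent for i ≠ j and sup_i ‖e_i - f_i‖ ≤ γ/4. Then for any norm-one x, y ∈ span(f_i), ‖|x| ∧ |y|‖ ≥ γ/2; in particular span(f_i) does stable phase retrieval in L². -/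
/-!
Independence and mean zero make `(f i)` orthonormal and the differences `e i - f i` pairwise
orthogonal, so `∑ cᵢ fᵢ ↦ ∑ cᵢ eᵢ` preserves norms and moves a unit vector of `span f` by at
most `γ/4`. As `|x| ⊓ |y|` is 1-Lipschitz in `x` and in `y`, the lower bound `γ` on `span e`
drops by at most `γ/2` on `span f`. Stability of phase retrieval then follows from the
homogeneity of that bound and the pointwise inequality `|x - y| ⊓ |x + y| ≤ ||x| - |y||`.
-/

open MeasureTheory ProbabilityTheory

open scoped InnerProductSpace

namespace MeasureTheory.L2

variable {Ω : Type*} [MeasurableSpace Ω] {μ : Measure Ω}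

theorem inner_eq_zero_of_indepFun {g h : Lp ℝ 2 μ} (hgh : IndepFun g h μ)
    (hg : ∫ ω, g ω ∂μ = 0) : ⟪g, h⟫_ℝ = 0 := by
  rw [L2.inner_def]
  simp only [RCLike.inner_apply, conj_trivial]
  rw [hgh.symm.integral_fun_mul_eq_mul_integral (Lp.aestronglyMeasurable h)
    (Lp.aestronglyMeasurable g), hg, mul_zero]

theorem orthonormal_of_indepFun {ι : Type*} {f : ι → Lp ℝ 2 μ}
    (hf_norm : ∀ i, ‖f i‖ = 1) (hf_mean : ∀ i, ∫ ω, f i ω ∂μ = 0)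
    (hf_indep : ∀ i j, i ≠ j → IndepFun (f i) (f j) μ) : Orthonormal ℝ f :=
  ⟨hf_norm, fun i j hij => inner_eq_zero_of_indepFun (hf_indep i j hij) (hf_mean i)⟩

end MeasureTheory.L2

section

variable {E : Type*} [NormedAddCommGroup E] [InnerProductSpace ℝ E] {ι : Type*}

theorem norm_sum_smul_sq_of_pairwise_inner_eq_zero {g : ι → E}
    (hg : Pairwise fun i j => ⟪g i, g j⟫_ℝ = 0) (s : Finset ι) (c : ι → ℝ) :
    ‖∑ i ∈ s, c i • g i‖ ^ 2 = ∑ i ∈ s, c i ^ 2 * ‖g i‖ ^ 2 := by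
  classical
  rw [← real_inner_self_eq_norm_sq, sum_inner]
  refine Finset.sum_congr rfl fun i hi => ?_
  rw [inner_sum, Finset.sum_eq_single_of_mem i hi fun j _ hji => by
    rw [real_inner_smul_left, real_inner_smul_right, hg hji.symm, mul_zero, mul_zero]]
  rw [real_inner_smul_left, real_inner_smul_right, real_inner_self_eq_norm_sq]
  ring

theorem exists_mem_span_norm_eq_norm_sub_le {e f : ι → E} (he : Orthonormal ℝ e)
    (hf : Orthonormal ℝ f) (hef : Pairwise fun i j => ⟪e i - f i, e j - f j⟫_ℝ = 0)
    {δ : ℝ} (hδ : 0 ≤ δ) (hclose : ∀ i, ‖e i - f i‖ ≤ δ) {x : E}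
    (hx : x ∈ Submodule.span ℝ (Set.range f)) :
    ∃ x' ∈ Submodule.span ℝ (Set.range e), ‖x'‖ = ‖x‖ ∧ ‖x' - x‖ ≤ δ * ‖x‖ := by
  obtain ⟨c, rfl⟩ := Finsupp.mem_span_range_iff_exists_finsupp.1 hx
  have norm_sq_eq : ∀ g : ι → E, Orthonormal ℝ g →
      ‖c.sum fun i a => a • g i‖ ^ 2 = ∑ i ∈ c.support, c i ^ 2 := fun g hg => by
    simp only [Finsupp.sum, norm_sum_smul_sq_of_pairwise_inner_eq_zero hg.2, hg.1, one_pow,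
      mul_one]
  refine ⟨c.sum fun i a => a • e i,
    Finsupp.mem_span_range_iff_exists_finsupp.2 ⟨c, rfl⟩, ?_, ?_⟩
  · rw [← sq_eq_sq₀ (norm_nonneg _) (norm_nonneg _), norm_sq_eq e he, norm_sq_eq f hf]
  · have hsub : ((c.sum fun i a => a • e i) - c.sum fun i a => a • f i) =
        c.sum fun i a => a • (e i - f i) := by
      simp only [Finsupp.sum, ← Finset.sum_sub_distrib, smul_sub]
    rw [← pow_le_pow_iff_left₀ (norm_nonneg _) (by positivity) two_ne_zero, hsub, mul_pow,
      norm_sq_eq f hf, Finsupp.sum, norm_sum_smul_sq_of_pairwise_inner_eq_zero hef, Finset.mul_sum]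
    refine Finset.sum_le_sum fun i _ => ?_
    rw [mul_comm (δ ^ 2)]
    gcongr
    exact hclose i

end

section

variable {α : Type*} [NormedAddCommGroup α] [Lattice α] [HasSolidNorm α] [IsOrderedAddMonoid α]

theorem norm_inf_abs_le_add_norm_sub (x y x' y' : α) :
    ‖|x'| ⊓ |y'|‖ ≤ ‖|x| ⊓ |y|‖ + ‖x' - x‖ + ‖y' - y‖ :=
  calc ‖|x'| ⊓ |y'|‖ ≤ ‖|x| ⊓ |y|‖ + ‖|x'| ⊓ |y'| - |x| ⊓ |y|‖ := norm_le_norm_add_norm_sub' _ _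
    _ ≤ ‖|x| ⊓ |y|‖ + (‖|x'| - |x|‖ + ‖|y'| - |y|‖) := by
      gcongr; exact norm_inf_sub_inf_le_add_norm _ _ _ _
    _ ≤ ‖|x| ⊓ |y|‖ + ‖x' - x‖ + ‖y' - y‖ := by
      rw [← add_assoc]; gcongr <;> exact norm_abs_sub_abs _ _

theorem le_norm_inf_abs_of_forall_exists_norm_sub_le {S T : Set α} {γ δ : ℝ}
    (hS : ∀ u ∈ S, ∀ v ∈ S, ‖u‖ = 1 → ‖v‖ = 1 → γ ≤ ‖|u| ⊓ |v|‖)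
    (hT : ∀ x ∈ T, ‖x‖ = 1 → ∃ x' ∈ S, ‖x'‖ = 1 ∧ ‖x' - x‖ ≤ δ) :
    ∀ x ∈ T, ∀ y ∈ T, ‖x‖ = 1 → ‖y‖ = 1 → γ - 2 * δ ≤ ‖|x| ⊓ |y|‖ := by
  intro x hx y hy hx1 hy1
  obtain ⟨x', hx', hx'1, hxx'⟩ := hT x hx hx1
  obtain ⟨y', hy', hy'1, hyy'⟩ := hT y hy hy1
  linarith [hS x' hx' y' hy' hx'1 hy'1, norm_inf_abs_le_add_norm_sub x y x' y']

end

theorem min_abs_sub_abs_add_le (a b : ℝ) : min |a - b| |a + b| ≤ |(|a| - |b|)| := by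
  rcases le_total 0 a with ha | ha <;> rcases le_total 0 b with hb | hb <;>
    simp only [abs_of_nonneg, abs_of_nonpos, ha, hb] <;> grind

namespace MeasureTheory.Lp

variable {Ω : Type*} [MeasurableSpace Ω] {μ : Measure Ω} {p : ENNReal}

theorem inf_abs_sub_abs_add_le (x y : Lp ℝ p μ) : |x - y| ⊓ |x + y| ≤ |(|x| - |y|)| := by
  rw [← Lp.coeFn_le]
  filter_upwards [Lp.coeFn_inf |x - y| |x + y|, Lp.coeFn_abs (x - y), Lp.coeFn_abs (x + y),
    Lp.coeFn_abs (|x| - |y|), Lp.coeFn_sub x y, Lp.coeFn_add x y, Lp.coeFn_sub |x| |y|,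
    Lp.coeFn_abs x, Lp.coeFn_abs y] with ω h1 h2 h3 h4 h5 h6 h7 h8 h9
  simp only [h1, h2, h3, h4, h5, h6, h7, h8, h9, Pi.inf_apply, Pi.sub_apply, Pi.add_apply]
  exact min_abs_sub_abs_add_le _ _

theorem min_mul_norm_inf_abs_le [Fact (1 ≤ p)] {s t : ℝ} (hs : 0 ≤ s) (ht : 0 ≤ t)
    (u v : Lp ℝ p μ) : min s t * ‖|u| ⊓ |v|‖ ≤ ‖|s • u| ⊓ |t • v|‖ := by
  have hm : 0 ≤ min s t := le_min hs ht
  rw [← Real.norm_of_nonneg hm, ← norm_smul]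
  refine norm_le_norm_of_abs_le_abs ?_
  rw [← Lp.coeFn_le]
  filter_upwards [Lp.coeFn_abs (min s t • (|u| ⊓ |v|)), Lp.coeFn_smul (min s t) (|u| ⊓ |v|),
    Lp.coeFn_inf |u| |v|, Lp.coeFn_abs u, Lp.coeFn_abs v, Lp.coeFn_abs (|s • u| ⊓ |t • v|),
    Lp.coeFn_inf |s • u| |t • v|, Lp.coeFn_abs (s • u), Lp.coeFn_abs (t • v),
    Lp.coeFn_smul s u, Lp.coeFn_smul t v] with ω h1 h2 h3 h4 h5 h6 h7 h8 h9 h10 h11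
  simp only [h1, h2, h3, h4, h5, h6, h7, h8, h9, h10, h11, Pi.smul_apply, Pi.inf_apply,
    smul_eq_mul, abs_mul, abs_of_nonneg hs, abs_of_nonneg ht, abs_of_nonneg hm]
  rw [abs_of_nonneg (le_min (abs_nonneg _) (abs_nonneg _)),
    abs_of_nonneg (le_min (mul_nonneg hs (abs_nonneg _)) (mul_nonneg ht (abs_nonneg _))),
    mul_min_of_nonneg _ _ hm]
  exact min_le_min (mul_le_mul_of_nonneg_right (min_le_left _ _) (abs_nonneg _))
    (mul_le_mul_of_nonneg_right (min_le_right _ _) (abs_nonneg _))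

theorem mul_min_norm_le_norm_inf_abs [Fact (1 ≤ p)] (S : Submodule ℝ (Lp ℝ p μ)) {c : ℝ}
    (hS : ∀ u ∈ S, ∀ v ∈ S, ‖u‖ = 1 → ‖v‖ = 1 → c ≤ ‖|u| ⊓ |v|‖) {u v : Lp ℝ p μ}
    (hu : u ∈ S) (hv : v ∈ S) : c * min ‖u‖ ‖v‖ ≤ ‖|u| ⊓ |v|‖ := by
  rcases eq_or_ne u 0 with rfl | hu0
  · simp
  rcases eq_or_ne v 0 with rfl | hv0
  · simp
  calc c * min ‖u‖ ‖v‖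
      ≤ min ‖u‖ ‖v‖ * ‖|‖u‖⁻¹ • u| ⊓ |‖v‖⁻¹ • v|‖ := by
        rw [mul_comm]
        gcongr
        exact hS _ (S.smul_mem _ hu) _ (S.smul_mem _ hv) (norm_smul_inv_norm hu0)
          (norm_smul_inv_norm hv0)
    _ ≤ ‖|‖u‖ • ‖u‖⁻¹ • u| ⊓ |‖v‖ • ‖v‖⁻¹ • v|‖ :=
        min_mul_norm_inf_abs_le (norm_nonneg _) (norm_nonneg _) _ _
    _ = ‖|u| ⊓ |v|‖ := by
        rw [smul_inv_smul₀ (norm_ne_zero_iff.2 hu0), smul_inv_smul₀ (norm_ne_zero_iff.2 hv0)]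

theorem min_norm_sub_norm_add_le [Fact (1 ≤ p)] (S : Submodule ℝ (Lp ℝ p μ)) {c : ℝ}
    (hc : 0 < c) (hS : ∀ u ∈ S, ∀ v ∈ S, ‖u‖ = 1 → ‖v‖ = 1 → c ≤ ‖|u| ⊓ |v|‖)
    {x y : Lp ℝ p μ} (hx : x ∈ S) (hy : y ∈ S) :
    min ‖x - y‖ ‖x + y‖ ≤ c⁻¹ * ‖|x| - |y|‖ := by
  rw [le_inv_mul_iff₀ hc]
  calc c * min ‖x - y‖ ‖x + y‖ ≤ ‖|x - y| ⊓ |x + y|‖ :=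
        mul_min_norm_le_norm_inf_abs S hS (S.sub_mem hx hy) (S.add_mem hx hy)
    _ ≤ ‖|x| - |y|‖ := by
        rw [← norm_abs_eq_norm (|x| - |y|)]
        refine norm_le_norm_of_abs_le_abs ?_
        rw [abs_of_nonneg (le_inf (abs_nonneg _) (abs_nonneg _)), abs_abs]
        exact inf_abs_sub_abs_add_le x y

end MeasureTheory.Lp

theorem SPR_perturbation_independent_L2_general {Ω : Type*} [MeasurableSpace Ω] (μ : Measure Ω)
    (e f : ℕ → Lp ℝ 2 μ) (γ : ℝ) (hγ : 0 < γ)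
    (he_on : Orthonormal ℝ e)
    (hf_norm : ∀ i, ‖f i‖ = 1)
    (hf_mean : ∀ i, ∫ ω, f i ω ∂μ = 0)
    (hf_indep : ∀ i j, i ≠ j → IndepFun (⇑(f i)) (⇑(f j)) μ)
    (hef_indep : ∀ i j, i ≠ j → IndepFun (⇑(e i)) (⇑(f j)) μ)
    (hclose : ∀ i, ‖e i - f i‖ ≤ γ / 4)
    (hE : ∀ u ∈ Submodule.span ℝ (Set.range e), ∀ v ∈ Submodule.span ℝ (Set.range e),
      ‖u‖ = 1 → ‖v‖ = 1 → γ ≤ ‖|u| ⊓ |v|‖) :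
    (∀ x ∈ Submodule.span ℝ (Set.range f), ∀ y ∈ Submodule.span ℝ (Set.range f),
      ‖x‖ = 1 → ‖y‖ = 1 → γ / 2 ≤ ‖|x| ⊓ |y|‖) ∧
    (∃ C : ℝ, ∀ x ∈ Submodule.span ℝ (Set.range f), ∀ y ∈ Submodule.span ℝ (Set.range f),
      min ‖x - y‖ ‖x + y‖ ≤ C * ‖|x| - |y|‖) := by
  have hf_on : Orthonormal ℝ f := L2.orthonormal_of_indepFun hf_norm hf_mean hf_indep
  have hef : Pairwise fun i j => ⟪e i - f i, e j - f j⟫_ℝ = 0 := fun i j hij => show _ = _ by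
    rw [inner_sub_left, inner_sub_right, inner_sub_right, he_on.2 hij, hf_on.2 hij,
      L2.inner_eq_zero_of_indepFun (hef_indep j i hij.symm).symm (hf_mean i),
      real_inner_comm (f j),
      L2.inner_eq_zero_of_indepFun (hef_indep i j hij).symm (hf_mean j)]
    ring
  have hF : ∀ x ∈ Submodule.span ℝ (Set.range f), ∀ y ∈ Submodule.span ℝ (Set.range f),
      ‖x‖ = 1 → ‖y‖ = 1 → γ / 2 ≤ ‖|x| ⊓ |y|‖ := by
    have := le_norm_inf_abs_of_forall_exists_norm_sub_le (δ := γ / 4) hE fun x hx hx1 => by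
      obtain ⟨x', hx', hnorm, hdist⟩ :=
        exists_mem_span_norm_eq_norm_sub_le he_on hf_on hef (by positivity) hclose hx
      exact ⟨x', hx', hnorm.trans hx1, by rwa [hx1, mul_one] at hdist⟩
    intro x hx y hy hx1 hy1
    linarith [this x hx y hy hx1 hy1]
  refine ⟨hF, 2 / γ, fun x hx y hy => ?_⟩
  simpa only [inv_div] using Lp.min_norm_sub_norm_add_le _ (half_pos hγ) hF hx hy

/-- Perturbation of SPR subspaces of `L²` spanned by independent mean-zero random
variables: if the orthonormal family `(e i)` spans a subspace on which
`‖|u| ⊓ |v|‖ ≥ γ` for norm-one `u, v`, and `(f i)` are normalized independent mean-zero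
random variables with `(e i, f j)` independent for `i ≠ j` and `‖e i - f i‖ ≤ γ/4`,
then `‖|x| ⊓ |y|‖ ≥ γ/2` for norm-one `x, y ∈ span(f i)`; in particular `span (f i)`
does stable phase retrieval in `L²`. -/
theorem SPR_perturbation_independent_L2 {Ω : Type*} [MeasurableSpace Ω] (μ : Measure Ω)
    [IsProbabilityMeasure μ] (e f : ℕ → Lp ℝ 2 μ) (γ : ℝ) (hγ : 0 < γ)
    (he_on : Orthonormal ℝ e)
    (he_mean : ∀ i, ∫ ω, e i ω ∂μ = 0)
    (he_indep : ∀ i j, i ≠ j → IndepFun (⇑(e i)) (⇑(e j)) μ)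
    (hf_norm : ∀ i, ‖f i‖ = 1)
    (hf_mean : ∀ i, ∫ ω, f i ω ∂μ = 0)
    (hf_indep : ∀ i j, i ≠ j → IndepFun (⇑(f i)) (⇑(f j)) μ)
    (hef_indep : ∀ i j, i ≠ j → IndepFun (⇑(e i)) (⇑(f j)) μ)
    (hclose : ∀ i, ‖e i - f i‖ ≤ γ / 4)
    (hE : ∀ u ∈ Submodule.span ℝ (Set.range e), ∀ v ∈ Submodule.span ℝ (Set.range e),
      ‖u‖ = 1 → ‖v‖ = 1 → γ ≤ ‖|u| ⊓ |v|‖) :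
    (∀ x ∈ Submodule.span ℝ (Set.range f), ∀ y ∈ Submodule.span ℝ (Set.range f),
      ‖x‖ = 1 → ‖y‖ = 1 → γ / 2 ≤ ‖|x| ⊓ |y|‖) ∧
    (∃ C : ℝ, ∀ x ∈ Submodule.span ℝ (Set.range f), ∀ y ∈ Submodule.span ℝ (Set.range f),
      min ‖x - y‖ ‖x + y‖ ≤ C * ‖|x| - |y|‖) :=
  SPR_perturbation_independent_L2_general μ e f γ hγ he_on hf_norm hf_mean hf_indep hef_indep hclose
    hE
end

section
/- Let μ be a probability measure, 1 ≤ q < p < ∞, and E a subspace of L^p(μ). If there is C ≥ 1 with ‖f‖_p ≤ C‖f‖_q for all f ∈ E and E does K-stable phase retrieval in L^q(μ), then for every r with q ≤ r ≤ p, E does CK-stable phase retrieval in L^r(μ): for all f, g ∈ E, min(‖f-g‖_r, ‖f+g‖_r) ≤ CK·‖|f|-|g|‖_r. -/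
open MeasureTheory
open scoped ENNReal

section

variable {Ω : Type*} [MeasurableSpace Ω] {μ : Measure Ω}

theorem min_eLpNorm_sub_add_le_of_exponent_le [IsProbabilityMeasure μ] {f g : Ω → ℝ}
    (hf : AEStronglyMeasurable f μ) (hg : AEStronglyMeasurable g μ) {r p : ℝ≥0∞} (hrp : r ≤ p) :
    min (eLpNorm (f - g) r μ) (eLpNorm (f + g) r μ) ≤
      min (eLpNorm (f - g) p μ) (eLpNorm (f + g) p μ) :=
  min_le_min (eLpNorm_le_eLpNorm_of_exponent_le hrp (hf.sub hg))
    (eLpNorm_le_eLpNorm_of_exponent_le hrp (hf.add hg))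

theorem eLpNorm_abs_sub_abs_le_of_exponent_le [IsProbabilityMeasure μ] {f g : Ω → ℝ}
    (hf : AEStronglyMeasurable f μ) (hg : AEStronglyMeasurable g μ) {q r : ℝ≥0∞} (hqr : q ≤ r) :
    eLpNorm (fun ω => |f ω| - |g ω|) q μ ≤ eLpNorm (fun ω => |f ω| - |g ω|) r μ :=
  eLpNorm_le_eLpNorm_of_exponent_le hqr (hf.norm.sub hg.norm)

theorem Lp.min_eLpNorm_sub_add_le_mul {p q : ℝ≥0∞} {E : Submodule ℝ (Lp ℝ p μ)} {C : ℝ≥0∞}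
    (hnorm : ∀ f ∈ E, eLpNorm (⇑f) p μ ≤ C * eLpNorm (⇑f) q μ)
    {f g : Lp ℝ p μ} (hf : f ∈ E) (hg : g ∈ E) :
    min (eLpNorm (⇑f - ⇑g) p μ) (eLpNorm (⇑f + ⇑g) p μ) ≤
      C * min (eLpNorm (⇑f - ⇑g) q μ) (eLpNorm (⇑f + ⇑g) q μ) := by
  have hsub := hnorm (f - g) (E.sub_mem hf hg)
  have hadd := hnorm (f + g) (E.add_mem hf hg)
  simp only [eLpNorm_congr_ae (Lp.coeFn_sub f g), eLpNorm_congr_ae (Lp.coeFn_add f g)] at hsub hadd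
  rw [mul_min_of_nonneg _ _ zero_le]
  exact min_le_min hsub hadd

end

theorem SPR_interpolation_general {Ω : Type*} [MeasurableSpace Ω] (μ : Measure Ω)
    [IsProbabilityMeasure μ] (p q r : ℝ≥0∞)
    (hqr : q ≤ r) (hrp : r ≤ p)
    (E : Submodule ℝ (Lp ℝ p μ)) (C K : ℝ≥0∞)
    (hnorm : ∀ f ∈ E, eLpNorm (⇑f) p μ ≤ C * eLpNorm (⇑f) q μ)
    (hK : ∀ f ∈ E, ∀ g ∈ E,
      min (eLpNorm (⇑f - ⇑g) q μ) (eLpNorm (⇑f + ⇑g) q μ) ≤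
        K * eLpNorm (fun ω => |f ω| - |g ω|) q μ) :
    ∀ f ∈ E, ∀ g ∈ E,
      min (eLpNorm (⇑f - ⇑g) r μ) (eLpNorm (⇑f + ⇑g) r μ) ≤
        C * K * eLpNorm (fun ω => |f ω| - |g ω|) r μ := by
  intro f hf g hg
  have hfm := Lp.aestronglyMeasurable f
  have hgm := Lp.aestronglyMeasurable g
  calc min (eLpNorm (⇑f - ⇑g) r μ) (eLpNorm (⇑f + ⇑g) r μ)
      ≤ min (eLpNorm (⇑f - ⇑g) p μ) (eLpNorm (⇑f + ⇑g) p μ) :=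
        min_eLpNorm_sub_add_le_of_exponent_le hfm hgm hrp
    _ ≤ C * min (eLpNorm (⇑f - ⇑g) q μ) (eLpNorm (⇑f + ⇑g) q μ) :=
        Lp.min_eLpNorm_sub_add_le_mul hnorm hf hg
    _ ≤ C * (K * eLpNorm (fun ω => |f ω| - |g ω|) q μ) := by gcongr; exact hK f hf g hg
    _ ≤ C * K * eLpNorm (fun ω => |f ω| - |g ω|) r μ := by
        rw [mul_assoc]
        gcongr
        exact eLpNorm_abs_sub_abs_le_of_exponent_le hfm hgm hqr

/-- Interpolation of stable phase retrieval: if on a probability space `‖·‖_p ≤ C‖·‖_q`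
on `E ⊆ L^p` and `E` does `K`-stable phase retrieval in `L^q` (`q < p`), then for any
`q ≤ r ≤ p`, `E` does `CK`-stable phase retrieval in `L^r`. -/
theorem SPR_interpolation {Ω : Type*} [MeasurableSpace Ω] (μ : Measure Ω)
    [IsProbabilityMeasure μ] (p q r : ℝ≥0∞) [Fact (1 ≤ p)]
    (h1q : 1 ≤ q) (hqp : q < p) (hp : p ≠ ∞) (hqr : q ≤ r) (hrp : r ≤ p)
    (E : Submodule ℝ (Lp ℝ p μ)) (C K : ℝ≥0∞) (hC : 1 ≤ C)
    (hnorm : ∀ f ∈ E, eLpNorm (⇑f) p μ ≤ C * eLpNorm (⇑f) q μ)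
    (hK : ∀ f ∈ E, ∀ g ∈ E,
      min (eLpNorm (⇑f - ⇑g) q μ) (eLpNorm (⇑f + ⇑g) q μ) ≤
        K * eLpNorm (fun ω => |f ω| - |g ω|) q μ) :
    ∀ f ∈ E, ∀ g ∈ E,
      min (eLpNorm (⇑f - ⇑g) r μ) (eLpNorm (⇑f + ⇑g) r μ) ≤
        C * K * eLpNorm (fun ω => |f ω| - |g ω|) r μ :=
  SPR_interpolation_general μ p q r hqr hrp E C K hnorm hK
end

section
/- Let (r_j) be the Rademacher sequence on [0,1] and f = Σ a_j r_j, g = Σ b_j r_j with Σ a_j² = 1, Σ b_j² ≤ 1, Σ a_j b_j = 0, and |a_j² - b_j²| ≤ 1/4 for all j. Then ‖f² - g²‖²_{L²} ≥ 2[(Σa_j²)² + (Σb_j²)² - (1/4)(Σa_j² + Σb_j²)] ≥ 1. In particular ‖|f|² - |g|²‖_{L²}² > 1. -/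
open MeasureTheory Finset

section
variable {Ω : Type*} [MeasurableSpace Ω]

lemma rad_abs (r : ℕ → Ω → ℝ) (hsq : ∀ j ω, (r j ω) ^ 2 = 1) (j : ℕ) (ω : Ω) :
    |r j ω| = 1 := by
  have h1 : (|r j ω| - 1) * (|r j ω| + 1) = 0 := by
    have h2 := hsq j ω
    have h3 := sq_abs (r j ω)
    nlinarith
  rcases mul_eq_zero.mp h1 with h | h
  · linarith
  · have := abs_nonneg (r j ω); linarith

lemma rad_int4 (μ : Measure Ω) [IsProbabilityMeasure μ] (r : ℕ → Ω → ℝ)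
    (hmeas : ∀ j, Measurable (r j)) (hsq : ∀ j ω, (r j ω) ^ 2 = 1)
    (j i k l : ℕ) : Integrable (fun ω => (r j ω * r i ω) * (r k ω * r l ω)) μ := by
  refine Integrable.mono' (integrable_const 1)
    ((((hmeas j).mul (hmeas i)).mul ((hmeas k).mul (hmeas l))).aestronglyMeasurable)
    (ae_of_all _ fun ω => ?_)
  rw [Real.norm_eq_abs, abs_mul, abs_mul, abs_mul, rad_abs r hsq, rad_abs r hsq,
    rad_abs r hsq, rad_abs r hsq]
  norm_num

lemma rad_integral_two (μ : Measure Ω) (r : ℕ → Ω → ℝ)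
    (hmean : ∀ j i, i < j → ∫ ω, r j ω * r i ω ∂μ = 0)
    (k l : ℕ) (hkl : k ≠ l) : ∫ ω, r k ω * r l ω ∂μ = 0 := by
  rcases lt_or_gt_of_ne hkl with h | h
  · rw [← hmean l k h]
    exact integral_congr_ae (ae_of_all _ fun ω => mul_comm _ _)
  · exact hmean k l h

lemma rad_integral_four (μ : Measure Ω) [IsProbabilityMeasure μ] (r : ℕ → Ω → ℝ)
    (hmeas : ∀ j, Measurable (r j)) (hsq : ∀ j ω, (r j ω) ^ 2 = 1)
    (hmean : ∀ j i, i < j → ∫ ω, r j ω * r i ω ∂μ = 0)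
    (horth : ∀ j i k l, i < j → l < k → (j, i) ≠ (k, l) →
      ∫ ω, (r j ω * r i ω) * (r k ω * r l ω) ∂μ = 0)
    (j i k l : ℕ) :
    ∫ ω, (r j ω * r i ω) * (r k ω * r l ω) ∂μ
      = if (j = i ∧ k = l) ∨ (j = k ∧ i = l) ∨ (j = l ∧ i = k) then 1 else 0 := by
  by_cases hji : j = i
  · subst hji
    have hpt : ∀ ω, (r j ω * r j ω) * (r k ω * r l ω) = r k ω * r l ω := by
      intro ω
      linear_combination (r k ω * r l ω) * hsq j ω
    rw [integral_congr_ae (ae_of_all _ hpt)]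
    by_cases hkl : k = l
    · subst hkl
      have hpt2 : ∀ ω, r k ω * r k ω = (1:ℝ) := by
        intro ω; linear_combination hsq k ω
      rw [integral_congr_ae (ae_of_all _ hpt2), integral_const]
      simp
    · rw [rad_integral_two μ r hmean k l hkl, if_neg]
      rintro (⟨_, h⟩ | ⟨rfl, rfl⟩ | ⟨rfl, rfl⟩) <;> exact hkl (by omega)
  · by_cases hkl : k = l
    · subst hkl
      have hpt : ∀ ω, (r j ω * r i ω) * (r k ω * r k ω) = r j ω * r i ω := by
        intro ω; linear_combination (r j ω * r i ω) * hsq k ω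
      rw [integral_congr_ae (ae_of_all _ hpt), rad_integral_two μ r hmean j i hji, if_neg]
      rintro (⟨h, _⟩ | ⟨rfl, rfl⟩ | ⟨rfl, rfl⟩) <;> exact hji (by omega)
    · by_cases heq : (j = k ∧ i = l) ∨ (j = l ∧ i = k)
      · rw [if_pos (Or.inr heq)]
        have hpt : ∀ ω, (r j ω * r i ω) * (r k ω * r l ω) = 1 := by
          intro ω
          rcases heq with ⟨rfl, rfl⟩ | ⟨rfl, rfl⟩ <;>
            linear_combination (r j ω ^ 2) * hsq i ω + hsq j ω
        rw [integral_congr_ae (ae_of_all _ hpt), integral_const]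
        simp
      · rw [if_neg (by rintro (⟨h, _⟩ | h); exacts [hji h, heq h])]
        push_neg at heq
        have ne1 : (i, j) ≠ (l, k) := by
          rw [ne_eq, Prod.mk.injEq]; rintro ⟨rfl, rfl⟩; exact heq.1 rfl rfl
        have ne2 : (i, j) ≠ (k, l) := by
          rw [ne_eq, Prod.mk.injEq]; rintro ⟨rfl, rfl⟩; exact heq.2 rfl rfl
        have ne3 : (j, i) ≠ (l, k) := by
          rw [ne_eq, Prod.mk.injEq]; rintro ⟨rfl, rfl⟩; exact heq.2 rfl rfl
        have ne4 : (j, i) ≠ (k, l) := by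
          rw [ne_eq, Prod.mk.injEq]; rintro ⟨rfl, rfl⟩; exact heq.1 rfl rfl
        rcases lt_or_gt_of_ne hji with h1 | h1 <;> rcases lt_or_gt_of_ne hkl with h2 | h2
        · rw [← horth i j l k h1 h2 ne1]
          exact integral_congr_ae (ae_of_all _ fun ω => by ring)
        · rw [← horth i j k l h1 h2 ne2]
          exact integral_congr_ae (ae_of_all _ fun ω => by ring)
        · rw [← horth j i l k h1 h2 ne3]
          exact integral_congr_ae (ae_of_all _ fun ω => by ring)
        · exact horth j i k l h1 h2 ne4

end

lemma sum_val_eval (N : ℕ) (c : ℕ → ℕ → ℝ) (hsymm : ∀ j i, c j i = c i j) :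
    ∑ j ∈ range N, ∑ i ∈ range N, ∑ k ∈ range N, ∑ l ∈ range N,
      c j i * c k l * (if (j = i ∧ k = l) ∨ (j = k ∧ i = l) ∨ (j = l ∧ i = k) then (1:ℝ) else 0)
    = (∑ j ∈ range N, c j j) ^ 2 + 2 * (∑ j ∈ range N, ∑ i ∈ range N, (c j i) ^ 2)
      - 2 * (∑ j ∈ range N, (c j j) ^ 2) := by
  classical
  have inner : ∀ j ∈ range N, ∀ i ∈ range N,
      ∑ k ∈ range N, ∑ l ∈ range N,
        c j i * c k l * (if (j = i ∧ k = l) ∨ (j = k ∧ i = l) ∨ (j = l ∧ i = k) then (1:ℝ) else 0)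
      = c j i * (if j = i then (∑ k ∈ range N, c k k) else 2 * c j i) := by
    intro j hj i hi
    by_cases hji : j = i
    · subst hji
      rw [if_pos rfl, Finset.mul_sum]
      refine Finset.sum_congr rfl fun k hk => ?_
      have hstep : ∀ l, c j j * c k l *
          (if (j = j ∧ k = l) ∨ (j = k ∧ j = l) ∨ (j = l ∧ j = k) then (1:ℝ) else 0)
          = if k = l then c j j * c k l else 0 := by
        intro l
        split_ifs with h1 h2 h2 <;> first | ring1 | (exfalso; omega)
      rw [Finset.sum_congr rfl fun l _ => hstep l, Finset.sum_ite_eq (range N) k fun l => c j j * c k l,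
        if_pos hk]
    · rw [if_neg hji]
      have hstep : ∀ k l, c j i * c k l *
          (if (j = i ∧ k = l) ∨ (j = k ∧ i = l) ∨ (j = l ∧ i = k) then (1:ℝ) else 0)
          = (if k = j then (if l = i then c j i * c k l else 0) else 0)
            + (if k = i then (if l = j then c j i * c k l else 0) else 0) := by
        intro k l
        split_ifs <;> first | ring1 | (exfalso; omega)
      calc ∑ k ∈ range N, ∑ l ∈ range N, c j i * c k l *
            (if (j = i ∧ k = l) ∨ (j = k ∧ i = l) ∨ (j = l ∧ i = k) then (1:ℝ) else 0)
          = ∑ k ∈ range N, ((if k = j then (∑ l ∈ range N, if l = i then c j i * c k l else 0) else 0)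
            + (if k = i then (∑ l ∈ range N, if l = j then c j i * c k l else 0) else 0)) := by
            refine Finset.sum_congr rfl fun k hk => ?_
            rw [Finset.sum_congr rfl fun l _ => hstep k l, Finset.sum_add_distrib]
            congr 1 <;> split_ifs <;> simp
        _ = c j i * c j i + c j i * c i j := by
            rw [Finset.sum_add_distrib, Finset.sum_ite_eq' (range N) j,
              Finset.sum_ite_eq' (range N) i, if_pos hj, if_pos hi,
              Finset.sum_ite_eq' (range N) i, Finset.sum_ite_eq' (range N) j,
              if_pos hi, if_pos hj]
        _ = c j i * (2 * c j i) := by rw [hsymm i j]; ring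
  rw [Finset.sum_congr rfl fun j hj => Finset.sum_congr rfl fun i hi => inner j hj i hi]
  have hsplit : ∀ j i, c j i * (if j = i then (∑ k ∈ range N, c k k) else 2 * c j i)
      = (if j = i then c j i * (∑ k ∈ range N, c k k) - 2 * (c j i) ^ 2 else 0) + 2 * (c j i) ^ 2 := by
    intro j i; split_ifs <;> ring
  rw [Finset.sum_congr rfl fun j _ => Finset.sum_congr rfl fun i _ => hsplit j i]
  have this2 : ∀ j ∈ range N, ∑ i ∈ range N,
      ((if j = i then c j i * (∑ k ∈ range N, c k k) - 2 * (c j i) ^ 2 else 0) + 2 * (c j i) ^ 2)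
      = (c j j * (∑ k ∈ range N, c k k) - 2 * (c j j) ^ 2) + ∑ i ∈ range N, 2 * (c j i) ^ 2 := by
    intro j hj
    rw [Finset.sum_add_distrib, Finset.sum_ite_eq (range N) j, if_pos hj]
  have h2 : ∑ j ∈ range N, ∑ i ∈ range N, 2 * (c j i) ^ 2
      = 2 * ∑ j ∈ range N, ∑ i ∈ range N, (c j i) ^ 2 := by
    rw [Finset.mul_sum]
    exact Finset.sum_congr rfl fun j _ => (Finset.mul_sum _ _ _).symm
  rw [Finset.sum_congr rfl this2, Finset.sum_add_distrib, Finset.sum_sub_distrib,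
    ← Finset.sum_mul, ← Finset.mul_sum, h2]
  ring


/-- Quantitative lower bound for `‖f² - g²‖²_{L²}` for `f = Σ aⱼ rⱼ`, `g = Σ bⱼ rⱼ` built
from a Rademacher-type sequence `(rⱼ)` (i.e. `rⱼ² = 1` and `{1} ∪ {rⱼ rᵢ}_{j>i}` is
orthonormal in `L²`), when `Σ aⱼ² = 1`, `Σ bⱼ² ≤ 1`, `Σ aⱼbⱼ = 0`, and
`|aⱼ² - bⱼ²| ≤ 1/4` for all `j`. -/
theorem rademacher_square_difference_bound {Ω : Type*} [MeasurableSpace Ω]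
    (μ : Measure Ω) [IsProbabilityMeasure μ]
    (r : ℕ → Ω → ℝ) (hmeas : ∀ j, Measurable (r j))
    (hsq : ∀ j ω, (r j ω) ^ 2 = 1)
    (hmean : ∀ j i, i < j → ∫ ω, r j ω * r i ω ∂μ = 0)
    (horth : ∀ j i k l, i < j → l < k → (j, i) ≠ (k, l) →
      ∫ ω, (r j ω * r i ω) * (r k ω * r l ω) ∂μ = 0)
    (N : ℕ) (a b : ℕ → ℝ)
    (ha : ∑ j ∈ Finset.range N, (a j) ^ 2 = 1)
    (hb : ∑ j ∈ Finset.range N, (b j) ^ 2 ≤ 1)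
    (hab : ∑ j ∈ Finset.range N, a j * b j = 0)
    (hdiff : ∀ j, |(a j) ^ 2 - (b j) ^ 2| ≤ 1 / 4) :
    2 * ((∑ j ∈ Finset.range N, (a j) ^ 2) ^ 2 + (∑ j ∈ Finset.range N, (b j) ^ 2) ^ 2
        - (1 / 4) * (∑ j ∈ Finset.range N, (a j) ^ 2 + ∑ j ∈ Finset.range N, (b j) ^ 2)) ≤
      ∫ ω, ((∑ j ∈ Finset.range N, a j * r j ω) ^ 2
        - (∑ j ∈ Finset.range N, b j * r j ω) ^ 2) ^ 2 ∂μ ∧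
    1 < ∫ ω, ((∑ j ∈ Finset.range N, a j * r j ω) ^ 2
        - (∑ j ∈ Finset.range N, b j * r j ω) ^ 2) ^ 2 ∂μ := by
  classical
  set c : ℕ → ℕ → ℝ := fun j i => a j * a i - b j * b i with hc
  -- pointwise expansion of f² - g²
  have e1 : ∀ ω, (∑ j ∈ Finset.range N, a j * r j ω) ^ 2
      - (∑ j ∈ Finset.range N, b j * r j ω) ^ 2
      = ∑ j ∈ Finset.range N, ∑ i ∈ Finset.range N, c j i * (r j ω * r i ω) := by
    intro ω
    rw [sq, sq, Finset.sum_mul_sum, Finset.sum_mul_sum, ← Finset.sum_sub_distrib]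
    refine Finset.sum_congr rfl fun j _ => ?_
    rw [← Finset.sum_sub_distrib]
    exact Finset.sum_congr rfl fun i _ => by simp only [hc]; ring
  have hpt : ∀ ω, ((∑ j ∈ Finset.range N, a j * r j ω) ^ 2
      - (∑ j ∈ Finset.range N, b j * r j ω) ^ 2) ^ 2
      = ∑ j ∈ Finset.range N, ∑ i ∈ Finset.range N, ∑ k ∈ Finset.range N, ∑ l ∈ Finset.range N,
        (c j i * c k l) * ((r j ω * r i ω) * (r k ω * r l ω)) := by
    intro ω
    rw [e1 ω, sq, Finset.sum_mul_sum]
    rw [Finset.sum_congr rfl fun j _ => Finset.sum_congr rfl fun k _ => Finset.sum_mul_sum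
      (Finset.range N) (Finset.range N) (fun i => c j i * (r j ω * r i ω))
      (fun l => c k l * (r k ω * r l ω))]
    rw [Finset.sum_congr rfl fun j _ => Finset.sum_comm]
    exact Finset.sum_congr rfl fun j _ => Finset.sum_congr rfl fun i _ =>
      Finset.sum_congr rfl fun k _ => Finset.sum_congr rfl fun l _ => by ring
  -- integrability
  have hint : ∀ j i k l : ℕ, Integrable
      (fun ω => (c j i * c k l) * ((r j ω * r i ω) * (r k ω * r l ω))) μ :=
    fun j i k l => (rad_int4 μ r hmeas hsq j i k l).const_mul _
  have int3 : ∀ j i k : ℕ, Integrable (fun ω => ∑ l ∈ Finset.range N,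
      (c j i * c k l) * ((r j ω * r i ω) * (r k ω * r l ω))) μ :=
    fun j i k => integrable_finset_sum _ fun l _ => hint j i k l
  have int2 : ∀ j i : ℕ, Integrable (fun ω => ∑ k ∈ Finset.range N, ∑ l ∈ Finset.range N,
      (c j i * c k l) * ((r j ω * r i ω) * (r k ω * r l ω))) μ :=
    fun j i => integrable_finset_sum _ fun k _ => int3 j i k
  have int1 : ∀ j : ℕ, Integrable (fun ω => ∑ i ∈ Finset.range N, ∑ k ∈ Finset.range N,
      ∑ l ∈ Finset.range N,
      (c j i * c k l) * ((r j ω * r i ω) * (r k ω * r l ω))) μ :=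
    fun j => integrable_finset_sum _ fun i _ => int2 j i
  -- compute the integral
  have key : ∫ ω, ((∑ j ∈ Finset.range N, a j * r j ω) ^ 2
      - (∑ j ∈ Finset.range N, b j * r j ω) ^ 2) ^ 2 ∂μ
      = (∑ j ∈ Finset.range N, c j j) ^ 2
        + 2 * (∑ j ∈ Finset.range N, ∑ i ∈ Finset.range N, (c j i) ^ 2)
        - 2 * (∑ j ∈ Finset.range N, (c j j) ^ 2) := by
    rw [integral_congr_ae (ae_of_all μ hpt)]
    rw [integral_finset_sum _ (fun j _ => int1 j)]
    rw [Finset.sum_congr rfl fun j _ => integral_finset_sum _ fun i _ => int2 j i]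
    rw [Finset.sum_congr rfl fun j _ => Finset.sum_congr rfl fun i _ =>
      integral_finset_sum _ fun k _ => int3 j i k]
    rw [Finset.sum_congr rfl fun j _ => Finset.sum_congr rfl fun i _ =>
      Finset.sum_congr rfl fun k _ => integral_finset_sum _ fun l _ => hint j i k l]
    rw [Finset.sum_congr rfl fun j _ => Finset.sum_congr rfl fun i _ =>
      Finset.sum_congr rfl fun k _ => Finset.sum_congr rfl fun l _ => by
        rw [integral_const_mul, rad_integral_four μ r hmeas hsq hmean horth j i k l]]
    exact sum_val_eval N c fun j i => by simp only [hc]; ring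
  -- algebraic identities
  have hS : ∑ j ∈ Finset.range N, ∑ i ∈ Finset.range N, (c j i) ^ 2
      = (∑ j ∈ Finset.range N, (a j) ^ 2) ^ 2 + (∑ j ∈ Finset.range N, (b j) ^ 2) ^ 2 := by
    have step : ∀ j ∈ Finset.range N, ∑ i ∈ Finset.range N, (c j i) ^ 2
        = ∑ i ∈ Finset.range N, ((a j) ^ 2 * (a i) ^ 2 + (b j) ^ 2 * (b i) ^ 2
          - 2 * ((a j * b j) * (a i * b i))) := by
      intro j _
      exact Finset.sum_congr rfl fun i _ => by simp only [hc]; ring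
    rw [Finset.sum_congr rfl step]
    have split : ∀ j ∈ Finset.range N,
        ∑ i ∈ Finset.range N, ((a j) ^ 2 * (a i) ^ 2 + (b j) ^ 2 * (b i) ^ 2
          - 2 * ((a j * b j) * (a i * b i)))
        = (a j) ^ 2 * (∑ i ∈ Finset.range N, (a i) ^ 2)
          + (b j) ^ 2 * (∑ i ∈ Finset.range N, (b i) ^ 2)
          - 2 * ((a j * b j) * (∑ i ∈ Finset.range N, a i * b i)) := by
      intro j _
      rw [Finset.mul_sum, Finset.mul_sum, Finset.mul_sum, Finset.mul_sum,
        ← Finset.sum_add_distrib, ← Finset.sum_sub_distrib]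
    rw [Finset.sum_congr rfl split, hab]
    rw [Finset.sum_sub_distrib, Finset.sum_add_distrib, ← Finset.sum_mul, ← Finset.sum_mul]
    simp [sq]
  have hT : ∑ j ∈ Finset.range N, (c j j) ^ 2
      ≤ 1 / 4 * (∑ j ∈ Finset.range N, (a j) ^ 2 + ∑ j ∈ Finset.range N, (b j) ^ 2) := by
    rw [← Finset.sum_add_distrib, Finset.mul_sum]
    refine Finset.sum_le_sum fun j _ => ?_
    have h1 := hdiff j
    have h2 : |(a j) ^ 2 - (b j) ^ 2| ≤ (a j) ^ 2 + (b j) ^ 2 := by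
      rw [abs_le]
      constructor <;> nlinarith [sq_nonneg (a j), sq_nonneg (b j)]
    have h3 := abs_nonneg ((a j) ^ 2 - (b j) ^ 2)
    have h4 := sq_abs ((a j) ^ 2 - (b j) ^ 2)
    have h5 : (c j j) ^ 2 = ((a j) ^ 2 - (b j) ^ 2) ^ 2 := by simp only [hc]; ring
    nlinarith [mul_le_mul h1 h2 h3 (by norm_num : (0:ℝ) ≤ 1 / 4)]
  have hB0 : 0 ≤ ∑ j ∈ Finset.range N, (b j) ^ 2 :=
    Finset.sum_nonneg fun j _ => sq_nonneg _
  have hD0 : 0 ≤ (∑ j ∈ Finset.range N, c j j) ^ 2 := sq_nonneg _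
  constructor
  · rw [key, hS]
    linarith
  · rw [key, hS]
    nlinarith [sq_nonneg (∑ j ∈ Finset.range N, (b j) ^ 2 - 1 / 8)]
end

section
/- No infinite dimensional subspace of real c₀ does stable phase retrieval: for every infinite dimensional closed subspace E ⊆ c₀ and every ε > 0 there exist norm-one x, y ∈ E with ‖|x| ∧ |y|‖ < ε. -/
open scoped ENNReal

/-- No infinite dimensional closed subspace of real `c₀` (realized as the subspace of
`ℓ∞` consisting of sequences tending to `0`) does stable phase retrieval: for every
`ε > 0` there are norm-one `x, y` in the subspace whose coordinatewise
`min |x n| |y n|` has supremum `< ε`. -/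
theorem no_SPR_subspace_of_c0 (E : Submodule ℝ (lp (fun _ : ℕ => ℝ) ∞))
    (hc0 : ∀ x ∈ E, Filter.Tendsto (fun n => x n) Filter.atTop (nhds 0))
    (hclosed : IsClosed (E : Set (lp (fun _ : ℕ => ℝ) ∞)))
    (hinf : ¬ FiniteDimensional ℝ E) :
    ∀ ε > (0:ℝ), ∃ x ∈ E, ∃ y ∈ E, ‖x‖ = 1 ∧ ‖y‖ = 1 ∧
      (⨆ n, min |x n| |y n|) < ε := by
  haveI : Fact ((1:ℝ≥0∞) ≤ ∞) := ⟨le_top⟩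
  intro ε hε
  -- E is nontrivial
  have hE : ∃ u ∈ E, u ≠ 0 := by
    by_contra h
    push_neg at h
    have hbot : E = ⊥ := by
      ext z
      simp only [Submodule.mem_bot]
      exact ⟨fun hz => h z hz, fun hz => hz ▸ E.zero_mem⟩
    exact hinf (hbot ▸ inferInstance)
  obtain ⟨u, huE, hu0⟩ := hE
  have hun : ‖u‖ ≠ 0 := norm_ne_zero_iff.mpr hu0
  set x : lp (fun _ : ℕ => ℝ) ∞ := ‖u‖⁻¹ • u with hxdef
  have hxE : x ∈ E := E.smul_mem _ huE
  have hxnorm : ‖x‖ = 1 := by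
    rw [hxdef, norm_smul, norm_inv, norm_norm, inv_mul_cancel₀ hun]
  -- find N with |x n| ≤ ε/2 for n ≥ N
  obtain ⟨N, hN⟩ := (Metric.tendsto_atTop.mp (hc0 x hxE)) (ε/2) (by positivity)
  -- find nonzero v ∈ E vanishing on coordinates < N
  let f : E →ₗ[ℝ] (Fin N → ℝ) :=
    { toFun := fun w i => (w : lp (fun _ : ℕ => ℝ) ∞) (i : ℕ)
      map_add' := by
        intro a b
        funext i
        simp [lp.coeFn_add]
      map_smul' := by
        intro c a
        funext i
        simp [lp.coeFn_smul] }
  have hninj : ¬ Function.Injective f := by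
    intro hinj
    exact hinf (FiniteDimensional.of_injective f hinj)
  rw [Function.not_injective_iff] at hninj
  obtain ⟨a, b, hfab, hab⟩ := hninj
  set v : lp (fun _ : ℕ => ℝ) ∞ := (a : lp (fun _ : ℕ => ℝ) ∞) - b with hvdef
  have hvE : v ∈ E := E.sub_mem a.2 b.2
  have hv0 : v ≠ 0 := by
    rw [hvdef, sub_ne_zero]
    exact fun h => hab (Subtype.ext h)
  have hvzero : ∀ n < N, v n = 0 := by
    intro n hn
    have := congr_fun hfab (⟨n, hn⟩ : Fin N)
    simp only [f, LinearMap.coe_mk, AddHom.coe_mk] at this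
    rw [hvdef, lp.coeFn_sub, Pi.sub_apply, this, sub_self]
  have hvn : ‖v‖ ≠ 0 := norm_ne_zero_iff.mpr hv0
  set y : lp (fun _ : ℕ => ℝ) ∞ := ‖v‖⁻¹ • v with hydef
  have hyE : y ∈ E := E.smul_mem _ hvE
  have hynorm : ‖y‖ = 1 := by
    rw [hydef, norm_smul, norm_inv, norm_norm, inv_mul_cancel₀ hvn]
  have hyzero : ∀ n < N, y n = 0 := by
    intro n hn
    rw [hydef, lp.coeFn_smul, Pi.smul_apply, hvzero n hn, smul_zero]
  refine ⟨x, hxE, y, hyE, hxnorm, hynorm, ?_⟩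
  have hsup : (⨆ n, min |x n| |y n|) ≤ ε/2 := by
    apply ciSup_le
    intro n
    rcases lt_or_ge n N with hn | hn
    · calc min |x n| |y n| ≤ |y n| := min_le_right _ _
        _ ≤ ε/2 := by rw [hyzero n hn]; simp; positivity
    · calc min |x n| |y n| ≤ |x n| := min_le_left _ _
        _ ≤ ε/2 := by
          have := hN n hn
          rw [Real.dist_eq, sub_zero] at this
          exact this.le
  linarith
end
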